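/- With notation as above (N ⊇ ℤ^n a lattice in ℚ^n with ψ(N) ⊆ ℤ, ψ = Σ x_i, σ = (ℝ_{≥0})^n, B = N ∩ [0,1)^n), the following identity of formal power series in t holds: Σ_{v ∈ N∩σ} t^{ψ(v)} = (Σ_{b ∈ B} t^{ψ(b)}) · (1/(1-t))^n. Consequently (1 - t)^n · Σ_{v ∈ N∩σ} t^{ψ(v)} = Σ_{b ∈ B} t^{ψ(b)}, a polynomial with nonnegative integer coefficients. -/

import Mathlib

/-!
Every `v ∈ N ∩ σ` splits uniquely as `v = b + m` with `b = fract v ∈ B` (it lies in `N` because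
`ℤⁿ ⊆ N`) and `m = ⌊v⌋ ∈ ℕⁿ`, and `ψ(v) = ψ(b) + Σ mᵢ`. Generating series of degree functions are
multiplicative on products, and that of `m ↦ Σ mᵢ` on `ℕⁿ` is `(Σₖ tᵏ)ⁿ = (1 - t)⁻ⁿ`. Finiteness of
`B`, needed for the coefficients to be honest counts, comes from the bounded denominators of `N`.
-/

open PowerSeries

section DegreeSeries

open Finset.HasAntidiagonal (antidiagonal mem_antidiagonal)

variable {α β γ : Type*}

noncomputable def degreeSeries (R : Type*) [CommSemiring R] (deg : α → ℕ) : R⟦X⟧ :=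
  mk fun s => (Nat.card {a // deg a = s} : R)

variable {R : Type*} [CommSemiring R]

theorem degreeSeries_congr {f : α → ℕ} {g : β → ℕ} (e : α ≃ β) (h : ∀ a, g (e a) = f a) :
    degreeSeries R f = degreeSeries R g := by
  ext s
  exact congrArg Nat.cast (Nat.card_congr (e.subtypeEquiv fun a => by rw [h]))

def sumDegreeEquiv (f : β → ℕ) (g : γ → ℕ) (s : ℕ) :
    {x : β × γ // f x.1 + g x.2 = s} ≃
      Σ p : antidiagonal s, {b // f b = p.1.1} × {c // g c = p.1.2} where
  toFun x := ⟨⟨(f x.1.1, g x.1.2), mem_antidiagonal.2 x.2⟩, ⟨x.1.1, rfl⟩, ⟨x.1.2, rfl⟩⟩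
  invFun y := ⟨(y.2.1, y.2.2), by rw [y.2.1.2, y.2.2.2]; exact mem_antidiagonal.1 y.1.2⟩
  left_inv _ := rfl
  right_inv := by
    rintro ⟨⟨⟨i, j⟩, h⟩, ⟨b, hb⟩, ⟨c, hc⟩⟩
    obtain rfl : f b = i := hb
    obtain rfl : g c = j := hc
    rfl

theorem degreeSeries_prod (f : β → ℕ) (g : γ → ℕ) [∀ s, Finite {b // f b = s}]
    [∀ s, Finite {c // g c = s}] :
    degreeSeries R (fun x : β × γ => f x.1 + g x.2) = degreeSeries R f * degreeSeries R g := by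
  ext s
  rw [coeff_mul, degreeSeries, coeff_mk, Nat.card_congr (sumDegreeEquiv f g s), Nat.card_sigma,
    ← Finset.sum_coe_sort (antidiagonal s)]
  simp [degreeSeries, Nat.card_prod]

theorem degreeSeries_id : degreeSeries R (fun k : ℕ => k) = mk 1 := by
  ext s
  simp [degreeSeries]

instance finite_subtype_sum_eq (n s : ℕ) : Finite {m : Fin n → ℕ // ∑ i, m i = s} :=
  Set.Finite.to_subtype <| (Finset.Nat.antidiagonalTuple n s).finite_toSet.subset
    fun _ hm => Finset.Nat.mem_antidiagonalTuple.2 hm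

theorem degreeSeries_sum (n : ℕ) :
    degreeSeries R (fun m : Fin n → ℕ => ∑ i, m i) = (mk 1) ^ n := by
  induction n with
  | zero =>
    ext s
    rcases s with _ | s <;> simp [degreeSeries, coeff_one]
  | succ n ih =>
    rw [pow_succ', ← ih, ← degreeSeries_id, ← degreeSeries_prod]
    exact (degreeSeries_congr (Fin.consEquiv fun _ => ℕ) fun x => Fin.sum_univ_succ _).symm

theorem mk_card_eq_degreeSeries {P : α → Prop} {φ : α → ℚ} (hφ : ∀ a, P a → ∃ k : ℕ, φ a = k) :
    mk (fun s => (Nat.card {a // P a ∧ φ a = s} : R)) =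
      degreeSeries R (fun x : {a // P a} => ⌊φ x⌋₊) := by
  ext s
  simp only [degreeSeries, coeff_mk]
  refine congrArg Nat.cast (Nat.card_congr <|
    (Equiv.subtypeSubtypeEquivSubtypeInter P _).symm.trans (Equiv.subtypeEquivRight fun x => ?_))
  obtain ⟨k, hk⟩ := hφ x x.2
  rw [hk, Nat.floor_natCast, Nat.cast_inj]

end DegreeSeries

section LatticePoints

variable {n : ℕ} (N : AddSubgroup (Fin n → ℚ))

/-- `N ∩ σ` -/
abbrev conePoints := {v : Fin n → ℚ // v ∈ N ∧ ∀ i, 0 ≤ v i}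

/-- `B = N ∩ [0,1)ⁿ` -/
abbrev boxPoints := {b : Fin n → ℚ // b ∈ N ∧ ∀ i, 0 ≤ b i ∧ b i < 1}

variable {N}

theorem finite_boxPoints {d : ℕ} (hd : 0 < d) (hdiv : ∀ v ∈ N, ∀ i, ∃ z : ℤ, v i * d = z) :
    Finite (boxPoints N) := by
  refine Set.Finite.to_subtype <|
    (Set.finite_range fun k : Fin n → Fin d => fun i => (k i : ℚ) / d).subset ?_
  rintro b ⟨hb, hbox⟩
  choose z hz using hdiv b hb
  have hd' : (0 : ℚ) < d := by exact_mod_cast hd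
  refine ⟨fun i => ⟨(z i).toNat, ?_⟩, funext fun i => ?_⟩
  · have : (z i : ℚ) < d := by rw [← hz]; nlinarith [(hbox i).2]
    have : z i < d := by exact_mod_cast this
    omega
  · have : (0 : ℚ) ≤ z i := by rw [← hz]; nlinarith [(hbox i).1]
    have : 0 ≤ z i := by exact_mod_cast this
    have hcast : ((z i).toNat : ℚ) = z i := by exact_mod_cast Int.toNat_of_nonneg this
    show ((z i).toNat : ℚ) / d = b i
    rw [hcast, ← hz, mul_div_cancel_right₀ _ hd'.ne']

theorem fract_mem {v : Fin n → ℚ} (hZ : ∀ x : Fin n → ℤ, (fun i => (x i : ℚ)) ∈ N) (hv : v ∈ N) :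
    (fun i => Int.fract (v i)) ∈ N := by
  convert N.sub_mem hv (hZ fun i => ⌊v i⌋) using 1
  ext i
  exact (Int.self_sub_floor _).symm

def conePointsEquiv (hZ : ∀ x : Fin n → ℤ, (fun i => (x i : ℚ)) ∈ N) :
    conePoints N ≃ boxPoints N × (Fin n → ℕ) where
  toFun v := (⟨fun i => Int.fract (v.1 i), fract_mem hZ v.2.1,
    fun i => ⟨Int.fract_nonneg _, Int.fract_lt_one _⟩⟩, fun i => ⌊v.1 i⌋₊)
  invFun x := ⟨fun i => x.1.1 i + x.2 i,
    by convert N.add_mem x.1.2.1 (hZ fun i => x.2 i) using 1; ext; simp,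
    fun i => add_nonneg (x.1.2.2 i).1 (Nat.cast_nonneg _)⟩
  left_inv v := by
    ext i
    simp [natCast_floor_eq_intCast_floor (v.2.2 i), Int.fract_add_floor]
  right_inv x := by
    ext i
    · simp [Int.fract_eq_self.2 (x.1.2.2 i)]
    · simp [Nat.floor_add_natCast (x.1.2.2 i).1, Nat.floor_eq_zero.2 (x.1.2.2 i).2]

end LatticePoints

section Main
variable {R : Type*} [CommSemiring R] {n : ℕ} {N : AddSubgroup (Fin n → ℚ)}

theorem exists_nat_sum_eq (hψ : ∀ v ∈ N, ∃ z : ℤ, ∑ i, v i = (z : ℚ)) {v : Fin n → ℚ}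
    (hv : v ∈ N) (h0 : ∀ i, 0 ≤ v i) : ∃ k : ℕ, ∑ i, v i = k := by
  obtain ⟨z, hz⟩ := hψ v hv
  have : (0 : ℚ) ≤ z := hz ▸ Finset.sum_nonneg fun i _ => h0 i
  exact ⟨z.toNat, by rw [hz]; exact_mod_cast (Int.toNat_of_nonneg (by exact_mod_cast this)).symm⟩

theorem mk_card_cone_eq (hψ : ∀ v ∈ N, ∃ z : ℤ, ∑ i, v i = (z : ℚ)) :
    mk (fun s => (Nat.card {v : Fin n → ℚ // v ∈ N ∧ (∀ i, 0 ≤ v i) ∧ ∑ i, v i = (s : ℚ)} : R)) =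
      degreeSeries R (fun v : conePoints N => ⌊∑ i, v.1 i⌋₊) := by
  simp only [← and_assoc]
  exact mk_card_eq_degreeSeries fun v hv => exists_nat_sum_eq hψ hv.1 hv.2

theorem mk_card_box_eq (hψ : ∀ v ∈ N, ∃ z : ℤ, ∑ i, v i = (z : ℚ)) :
    mk (fun s => (Nat.card {b : Fin n → ℚ //
        b ∈ N ∧ (∀ i, 0 ≤ b i ∧ b i < 1) ∧ ∑ i, b i = (s : ℚ)} : R)) =
      degreeSeries R (fun b : boxPoints N => ⌊∑ i, b.1 i⌋₊) := by
  simp only [← and_assoc]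
  exact mk_card_eq_degreeSeries fun b hb => exists_nat_sum_eq hψ hb.1 fun i => (hb.2 i).1

theorem floor_sum_conePointsEquiv_symm (hZ : ∀ x : Fin n → ℤ, (fun i => (x i : ℚ)) ∈ N)
    (x : boxPoints N × (Fin n → ℕ)) :
    ⌊∑ i, ((conePointsEquiv hZ).symm x).1 i⌋₊ = ⌊∑ i, x.1.1 i⌋₊ + ∑ i, x.2 i := by
  simp only [conePointsEquiv, Equiv.coe_fn_symm_mk, Finset.sum_add_distrib, ← Nat.cast_sum]
  exact Nat.floor_add_natCast (Finset.sum_nonneg fun i _ => (x.1.2.2 i).1) _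

theorem degreeSeries_cone_eq (hZ : ∀ x : Fin n → ℤ, (fun i => (x i : ℚ)) ∈ N)
    [Finite (boxPoints N)] :
    degreeSeries R (fun v : conePoints N => ⌊∑ i, v.1 i⌋₊) =
      degreeSeries R (fun b : boxPoints N => ⌊∑ i, b.1 i⌋₊) * mk 1 ^ n := by
  rw [← degreeSeries_sum, ← degreeSeries_prod]
  exact (degreeSeries_congr (conePointsEquiv hZ).symm (floor_sum_conePointsEquiv_symm hZ)).symm

end Main

/-- With `N ⊇ ℤ^n` a finite-index lattice in `ℚ^n` on which `ψ = Σ xᵢ` takes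
integer values, `σ` the positive orthant, `B = N ∩ [0,1)^n`:
`Σ_{v ∈ N∩σ} t^{ψ(v)} = (Σ_{b∈B} t^{ψ(b)})·(1/(1-t))^n` in `ℚ[[t]]`, and
consequently `(1-t)^n · Σ_{v ∈ N∩σ} t^{ψ(v)} = Σ_{b∈B} t^{ψ(b)}`. -/
theorem stmt_14 (n : ℕ) (N : AddSubgroup (Fin n → ℚ))
    (hZ : ∀ x : Fin n → ℤ, (fun i => (x i : ℚ)) ∈ N)
    (hfin : ∃ d : ℕ, 0 < d ∧ ∀ v ∈ N, ∀ i, ∃ z : ℤ, v i * d = (z : ℚ))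
    (hψ : ∀ v ∈ N, ∃ z : ℤ, ∑ i, v i = (z : ℚ)) :
    (PowerSeries.mk fun s => (Nat.card {v : Fin n → ℚ //
        v ∈ N ∧ (∀ i, 0 ≤ v i) ∧ ∑ i, v i = (s : ℚ)} : ℚ)) =
      (PowerSeries.mk fun s => (Nat.card {b : Fin n → ℚ //
        b ∈ N ∧ (∀ i, 0 ≤ b i ∧ b i < 1) ∧ ∑ i, b i = (s : ℚ)} : ℚ)) *
      ((1 - (X : PowerSeries ℚ))⁻¹) ^ n ∧
    (1 - (X : PowerSeries ℚ)) ^ n *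
      (PowerSeries.mk fun s => (Nat.card {v : Fin n → ℚ //
        v ∈ N ∧ (∀ i, 0 ≤ v i) ∧ ∑ i, v i = (s : ℚ)} : ℚ)) =
      (PowerSeries.mk fun s => (Nat.card {b : Fin n → ℚ //
        b ∈ N ∧ (∀ i, 0 ≤ b i ∧ b i < 1) ∧ ∑ i, b i = (s : ℚ)} : ℚ)) := by
  obtain ⟨d, hd, hdiv⟩ := hfin
  have := finite_boxPoints hd hdiv
  have hinv : (1 - X : ℚ⟦X⟧)⁻¹ = mk 1 :=
    (PowerSeries.inv_eq_iff_mul_eq_one (by simp)).2 (mk_one_mul_one_sub_eq_one ℚ)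
  have hseries := degreeSeries_cone_eq (R := ℚ) hZ
  rw [← mk_card_cone_eq hψ, ← mk_card_box_eq hψ, ← hinv] at hseries
  refine ⟨hseries, ?_⟩
  rw [hseries, mul_left_comm, ← mul_pow, PowerSeries.mul_inv_cancel _ (by simp), one_pow, mul_one]
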